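/- Let q be a prime power, n ≥ 1, and 1 ≤ L ≤ k ≤ n. Let α_1,…,α_n ∈ F_q be pairwise distinct and all nonzero, and set C1 = GRS_{n,k}(α,1) and C2 = GRS_{n,k−L}(α,α^L). Then every subset J ⊆ {1,…,n} with |J| ≥ k and n − |J| ≤ k − L satisfies dim P_J(C1) − dim P_J(C2) = L = dim C1 − dim C2 and dim P_J̄(C1) = dim P_J̄(C2); consequently dim P̃_J(ker P̃_J̄) = dim C1 − dim C2 = L. -/

import Mathlib

set_option autoImplicit false

open Submodule Module

variable {F : Type*} [Field F] [Fintype F] {n : ℕ}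

/-- `P_J`: the projection onto the coordinates in `J`. -/
noncomputable def proj (J : Finset (Fin n)) : (Fin n → F) →ₗ[F] (J → F) :=
  LinearMap.funLeft F F (fun j => (j : Fin n))

/-- `P̃_J : C1/C2 → P_J(C1)/P_J(C2)`, the induced map sending `x + C2` to `P_J(x) + P_J(C2)`. -/
noncomputable def ptilde (C1 C2 : Submodule F (Fin n → F)) (J : Finset (Fin n)) :
    (↥C1 ⧸ C2.comap C1.subtype) →ₗ[F]
      (↥(C1.map (proj J)) ⧸ (C2.map (proj J)).comap (C1.map (proj J)).subtype) :=
  Submodule.mapQ _ _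
    (LinearMap.codRestrict (C1.map (proj J)) ((proj J).comp C1.subtype)
      (fun x => Submodule.mem_map_of_mem x.2))
    (fun _ hx => Submodule.mem_map_of_mem hx)


/-- The generalized Reed–Solomon code
`GRS_{n,k}(α,v) = {(v₁ h(α₁),…,vₙ h(αₙ)) : h ∈ F[X], deg h ≤ k−1}`. -/
noncomputable def GRS (k : ℕ) (α v : Fin n → F) : Submodule F (Fin n → F) :=
  (Polynomial.degreeLT F k).map
    (LinearMap.pi fun i => v i • Polynomial.leval (α i))

/-! Weighted evaluation of polynomials of degree `< k` at `m` distinct nodes has rank `min k m`: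
it is injective for `k ≤ m` (too few roots) and onto for `m ≤ k` (Lagrange interpolation).
So `P_J(C1)`, `P_J(C2)`, `P_J̄(C1)`, `P_J̄(C2)` have dimensions `k`, `k - L`, `n - |J|`, `n - |J|`.
As `α_i^L h(α_i)` is the evaluation of `X^L h`, `C2 ⊆ C1`; hence `P_J̄(C2) = P_J̄(C1)`, so `P̃_J̄`
vanishes on all of `C1/C2`, while `P̃_J` is onto, with image of dimension
`dim P_J(C1) - dim P_J(C2) = L`. -/

open Polynomial

section

variable {K : Type*} [Field K]

noncomputable def weightedEval {ι : Type*} (β w : ι → K) : K[X] →ₗ[K] (ι → K) :=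
  LinearMap.pi fun i => w i • leval (β i)

theorem weightedEval_apply {ι : Type*} (β w : ι → K) (p : K[X]) (i : ι) :
    weightedEval β w p i = w i * p.eval (β i) :=
  rfl

variable {ι : Type*} [Fintype ι] {β w : ι → K}

theorem injective_weightedEval_domRestrict_degreeLT (hβ : Function.Injective β) (hw : ∀ i, w i ≠ 0)
    {k : ℕ} (hk : k ≤ Fintype.card ι) :
    Function.Injective ((weightedEval β w).domRestrict (degreeLT K k)) := by
  rw [← LinearMap.ker_eq_bot, LinearMap.ker_eq_bot']
  rintro ⟨p, hp⟩ hzero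
  have heval (i : ι) : p.eval (β i) = 0 :=
    (mul_eq_zero.mp (congrFun hzero i)).resolve_left (hw i)
  have hdeg : p.degree < (Finset.univ : Finset ι).card :=
    (mem_degreeLT.mp hp).trans_le (by exact_mod_cast hk)
  exact Subtype.ext <| eq_zero_of_degree_lt_of_eval_index_eq_zero _ hβ.injOn hdeg
    fun i _ => heval i

theorem map_weightedEval_degreeLT_eq_top (hβ : Function.Injective β) (hw : ∀ i, w i ≠ 0)
    {k : ℕ} (hk : Fintype.card ι ≤ k) :
    (degreeLT K k).map (weightedEval β w) = ⊤ := by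
  classical
  refine eq_top_iff.mpr fun f _ => ⟨Lagrange.interpolate Finset.univ β (fun i => f i / w i),
    mem_degreeLT.mpr ((Lagrange.degree_interpolate_lt _ hβ.injOn).trans_le ?_), ?_⟩
  · exact_mod_cast hk
  · funext i
    rw [weightedEval_apply, Lagrange.eval_interpolate_at_node _ hβ.injOn (Finset.mem_univ i),
      mul_div_cancel₀ _ (hw i)]

theorem finrank_map_weightedEval_degreeLT (hβ : Function.Injective β) (hw : ∀ i, w i ≠ 0)
    (k : ℕ) :
    finrank K ((degreeLT K k).map (weightedEval β w)) = min k (Fintype.card ι) := by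
  rcases le_total k (Fintype.card ι) with hk | hk
  · rw [min_eq_left hk, ← LinearMap.range_domRestrict,
      LinearMap.finrank_range_of_inj (injective_weightedEval_domRestrict_degreeLT hβ hw hk),
      (degreeLTEquiv K k).finrank_eq, finrank_fin_fun]
  · rw [min_eq_right hk, map_weightedEval_degreeLT_eq_top hβ hw hk, finrank_top,
      finrank_fintype_fun_eq_card]

end

section

variable {K : Type*} [Field K] {m : ℕ}

theorem GRS_eq_map_weightedEval (k : ℕ) (α v : Fin m → K) :
    GRS k α v = (degreeLT K k).map (weightedEval α v) :=
  rfl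

theorem map_proj_GRS (k : ℕ) (α v : Fin m → K) (J : Finset (Fin m)) :
    (GRS k α v).map (proj J) =
      (degreeLT K k).map (weightedEval (fun j : J => α j) (fun j : J => v j)) := by
  rw [GRS, ← Submodule.map_comp]
  rfl

theorem finrank_GRS {α v : Fin m → K} (hα : Function.Injective α) (hv : ∀ i, v i ≠ 0) (k : ℕ) :
    finrank K (GRS k α v) = min k m := by
  rw [GRS_eq_map_weightedEval, finrank_map_weightedEval_degreeLT hα hv, Fintype.card_fin]

theorem finrank_map_proj_GRS {α v : Fin m → K} (hα : Function.Injective α)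
    (hv : ∀ i, v i ≠ 0) (k : ℕ) (J : Finset (Fin m)) :
    finrank K ((GRS k α v).map (proj J)) = min k J.card := by
  rw [map_proj_GRS, finrank_map_weightedEval_degreeLT (β := fun j : J => α j)
    (hα.comp Subtype.val_injective) (fun j => hv j), Fintype.card_coe]

theorem GRS_sub_le_GRS (α : Fin m → K) {k L : ℕ} (hLk : L ≤ k) :
    GRS (k - L) α (fun i => α i ^ L) ≤ GRS k α (fun _ => 1) := by
  rintro _ ⟨p, hp, rfl⟩
  refine ⟨X ^ L * p, ?_, ?_⟩
  · rcases eq_or_ne p 0 with rfl | hp0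
    · simp
    rw [SetLike.mem_coe, mem_degreeLT] at hp ⊢
    rw [degree_eq_natDegree hp0] at hp
    rw [degree_mul, degree_X_pow, degree_eq_natDegree hp0]
    norm_cast at hp ⊢
    omega
  · funext i
    simp [mul_comm]

variable {C1 C2 : Submodule K (Fin m → K)}

theorem ptilde_surjective (J : Finset (Fin m)) : Function.Surjective (ptilde C1 C2 J) := by
  intro y
  obtain ⟨⟨_, x, hx, rfl⟩, rfl⟩ := Submodule.Quotient.mk_surjective _ y
  exact ⟨Submodule.Quotient.mk ⟨x, hx⟩, rfl⟩

theorem ker_ptilde_eq_top {J : Finset (Fin m)} (h : C1.map (proj J) ≤ C2.map (proj J)) :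
    LinearMap.ker (ptilde C1 C2 J) = ⊤ := by
  have : Subsingleton (C1.map (proj J) ⧸ (C2.map (proj J)).comap (C1.map (proj J)).subtype) :=
    Submodule.Quotient.subsingleton_iff.mpr (comap_subtype_eq_top.mpr h)
  exact LinearMap.ker_eq_top.mpr (Subsingleton.elim _ _)

theorem finrank_map_ker_ptilde_add (h21 : C2 ≤ C1) {J J' : Finset (Fin m)}
    (hJ' : C1.map (proj J') ≤ C2.map (proj J')) :
    finrank K ((LinearMap.ker (ptilde C1 C2 J')).map (ptilde C1 C2 J)) +
        finrank K (C2.map (proj J)) = finrank K (C1.map (proj J)) := by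
  rw [ker_ptilde_eq_top hJ', Submodule.map_top,
    LinearMap.range_eq_top.mpr (ptilde_surjective J), finrank_top,
    ← (comapSubtypeEquivOfLe (map_mono h21)).finrank_eq]
  exact finrank_quotient_add_finrank _

end

theorem conventional_scheme_qualified_general (k L : ℕ)
    (hLk : L ≤ k) (hk : k ≤ n) (α : Fin n → F)
    (hα : Function.Injective α) (hα0 : ∀ i, α i ≠ 0)
    (J : Finset (Fin n)) (hJ : k ≤ J.card) (hJbar : n - J.card ≤ k - L) :
    Module.finrank F ↥((GRS k α (fun _ => (1:F))).map (proj J))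
        = Module.finrank F ↥((GRS (k - L) α (fun i => α i ^ L)).map (proj J)) + L
      ∧ Module.finrank F ↥(GRS k α (fun _ => (1:F)))
        = Module.finrank F ↥(GRS (k - L) α (fun i => α i ^ L)) + L
      ∧ Module.finrank F ↥((GRS k α (fun _ => (1:F))).map (proj Jᶜ))
        = Module.finrank F ↥((GRS (k - L) α (fun i => α i ^ L)).map (proj Jᶜ))
      ∧ Module.finrank F
          ↥((LinearMap.ker (ptilde (GRS k α (fun _ => (1:F))) (GRS (k - L) α (fun i => α i ^ L)) Jᶜ)).map
              (ptilde (GRS k α (fun _ => (1:F))) (GRS (k - L) α (fun i => α i ^ L)) J))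
        = L := by
  have h1 : ∀ _ : Fin n, (1 : F) ≠ 0 := fun _ => one_ne_zero
  have hαL : ∀ i, α i ^ L ≠ 0 := fun i => pow_ne_zero L (hα0 i)
  have hcard : Jᶜ.card = n - J.card := by rw [Finset.card_compl, Fintype.card_fin]
  have hC1 := finrank_GRS hα h1 k
  have hC2 := finrank_GRS hα hαL (k - L)
  have hC1J := finrank_map_proj_GRS hα h1 k J
  have hC2J := finrank_map_proj_GRS hα hαL (k - L) J
  have hC1Jc := finrank_map_proj_GRS hα h1 k Jᶜ
  have hC2Jc := finrank_map_proj_GRS hα hαL (k - L) Jᶜ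
  have hle := GRS_sub_le_GRS α hLk
  have hJc : (GRS k α fun _ => (1 : F)).map (proj Jᶜ) ≤
      (GRS (k - L) α fun i => α i ^ L).map (proj Jᶜ) :=
    (eq_of_le_of_finrank_le (map_mono hle) (by omega)).ge
  have hquot := finrank_map_ker_ptilde_add hle (J := J) hJc
  refine ⟨by omega, by omega, by omega, by omega⟩

/-- For `C1 = GRS_{n,k}(α,1)` and `C2 = GRS_{n,k−L}(α,α^L)` with `1 ≤ L ≤ k ≤ n` and
pairwise distinct nonzero `α_i`, every `J` with `|J| ≥ k` and `n − |J| ≤ k − L` satisfies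
`dim P_J(C1) = dim P_J(C2) + L`, `dim C1 = dim C2 + L`, `dim P_J̄(C1) = dim P_J̄(C2)`,
and consequently `dim P̃_J(ker P̃_J̄) = L`. -/
theorem conventional_scheme_qualified (hn : 0 < n) (k L : ℕ)
    (hL : 1 ≤ L) (hLk : L ≤ k) (hk : k ≤ n) (α : Fin n → F)
    (hα : Function.Injective α) (hα0 : ∀ i, α i ≠ 0)
    (J : Finset (Fin n)) (hJ : k ≤ J.card) (hJbar : n - J.card ≤ k - L) :
    Module.finrank F ↥((GRS k α (fun _ => (1:F))).map (proj J))
        = Module.finrank F ↥((GRS (k - L) α (fun i => α i ^ L)).map (proj J)) + L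
      ∧ Module.finrank F ↥(GRS k α (fun _ => (1:F)))
        = Module.finrank F ↥(GRS (k - L) α (fun i => α i ^ L)) + L
      ∧ Module.finrank F ↥((GRS k α (fun _ => (1:F))).map (proj Jᶜ))
        = Module.finrank F ↥((GRS (k - L) α (fun i => α i ^ L)).map (proj Jᶜ))
      ∧ Module.finrank F
          ↥((LinearMap.ker (ptilde (GRS k α (fun _ => (1:F))) (GRS (k - L) α (fun i => α i ^ L)) Jᶜ)).map
              (ptilde (GRS k α (fun _ => (1:F))) (GRS (k - L) α (fun i => α i ^ L)) J))
        = L :=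
  conventional_scheme_qualified_general k L hLk hk α hα hα0 J hJ hJbar
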